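/- Every homogeneous polynomial of degree 3 in ℂ[x,y,z] that vanishes at the nine projective points [0:1:1], [1:0:1], [0:−5:1], [0:10:1], [5:0:3], [10:0:3], [5:5:2], [1:4:1], [4:1:1] is a scalar multiple of x·y·(x+y−5z); in particular the space of such cubic forms has dimension 1. -/

import Mathlib

/-!
Each of the lines `x = 0`, `y = 0`, `x + y = 5z` carries three of the nine points, none of them a
vertex of the triangle. A cubic through the points therefore restricts to `x = 0` as
`a (y - z)(y + 5z)(y - 10z)` and to `y = 0` as `b (x - z)(3x - 5z)(3x - 10z)`; comparing at the
common vertex `[0:0:1]` gives `b = -a`, and the three points on `x + y = 5z` then force `a = 0`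
and leave exactly the multiples of `xy(x + y - 5z)`. In coordinates this is an elimination in the
nine linear conditions on the ten coefficients, carried out side by side.
-/

open MvPolynomial

noncomputable section

/-- The conic `Q = x² + y² + z² − 2xy − 2xz − 2yz`. -/
def Q : MvPolynomial (Fin 3) ℂ :=
  X 0 ^ 2 + X 1 ^ 2 + X 2 ^ 2 - 2 * X 0 * X 1 - 2 * X 0 * X 2 - 2 * X 1 * X 2

/-- Coordinates of the nine points. -/
def pts : Fin 9 → (Fin 3 → ℂ) :=
  ![![0, 1, 1], ![1, 0, 1], ![0, (-5), 1], ![0, 10, 1], ![5, 0, 3], ![10, 0, 3], ![5, 5, 2], ![1, 4, 1], ![4, 1, 1]]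

theorem MvPolynomial.IsHomogeneous.eq_sum_antidiagonalTuple {R : Type*} [CommSemiring R]
    {k n : ℕ} {F : MvPolynomial (Fin k) R} (hF : F.IsHomogeneous n) :
    F = ∑ t ∈ Finset.Nat.antidiagonalTuple k n,
      C (coeff (Finsupp.equivFunOnFinite.symm t) F) * ∏ i, X i ^ t i := by
  have hsupp : F.support ⊆ (Finset.Nat.antidiagonalTuple k n).map
      Finsupp.equivFunOnFinite.symm.toEmbedding := by
    intro d hd
    rw [Finset.mem_map_equiv, Equiv.symm_symm, Finset.Nat.mem_antidiagonalTuple,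
      ← hF (mem_support_iff.mp hd)]
    simp [Finsupp.weight_apply, Finsupp.sum_fintype]
  conv_lhs => rw [F.as_sum, Finset.sum_subset hsupp fun d _ hd => by
    rw [notMem_support_iff.mp hd, map_zero]]
  rw [Finset.sum_map]
  refine Finset.sum_congr rfl fun t _ => ?_
  rw [Equiv.coe_toEmbedding, monomial_eq, Finsupp.prod_fintype _ _ fun _ => pow_zero _]
  rfl

theorem Finset.Nat.sum_antidiagonalTuple_three_three {M : Type*} [AddCommMonoid M]
    (f : (Fin 3 → ℕ) → M) :
    ∑ t ∈ antidiagonalTuple 3 3, f t = f ![3, 0, 0] + f ![2, 1, 0] + f ![2, 0, 1] +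
      f ![1, 2, 0] + f ![1, 1, 1] + f ![1, 0, 2] + f ![0, 3, 0] + f ![0, 2, 1] + f ![0, 1, 2] +
      f ![0, 0, 3] := by
  rw [show antidiagonalTuple 3 3 = {![3, 0, 0], ![2, 1, 0], ![2, 0, 1], ![1, 2, 0], ![1, 1, 1],
    ![1, 0, 2], ![0, 3, 0], ![0, 2, 1], ![0, 1, 2], ![0, 0, 3]} by decide]
  simp +decide only [Finset.sum_insert, Finset.mem_insert, Finset.mem_singleton,
    Finset.sum_singleton]
  abel

def triangleCubic : MvPolynomial (Fin 3) ℂ := X 0 * X 1 * (X 0 + X 1 - 5 * X 2)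

theorem isHomogeneous_triangleCubic : triangleCubic.IsHomogeneous 3 := by
  have h5 : (5 * X 2 : MvPolynomial (Fin 3) ℂ).IsHomogeneous 1 := by
    simpa only [map_ofNat] using isHomogeneous_C_mul_X (σ := Fin 3) (5 : ℂ) 2
  exact ((isHomogeneous_X ℂ 0).mul (isHomogeneous_X ℂ 1)).mul
    (((isHomogeneous_X ℂ 0).add (isHomogeneous_X ℂ 1)).sub h5)

theorem triangleCubic_ne_zero : triangleCubic ≠ 0 := fun h => by
  simpa [triangleCubic] using congrArg (eval ![1, 1, 0]) h

theorem eval_pts_triangleCubic (i : Fin 9) : eval (pts i) triangleCubic = 0 := by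
  fin_cases i <;> norm_num [pts, triangleCubic, Matrix.cons_val_two]

theorem sum_eq_C_mul_triangleCubic_of_eval_pts (a : (Fin 3 → ℕ) → ℂ)
    (h : ∀ i, ∑ t ∈ Finset.Nat.antidiagonalTuple 3 3, a t * ∏ j, pts i j ^ t j = 0) :
    ∑ t ∈ Finset.Nat.antidiagonalTuple 3 3, C (a t) * ∏ j, X j ^ t j =
      C (a ![2, 1, 0]) * triangleCubic := by
  have h0 := h 0; have h1 := h 1; have h2 := h 2; have h3 := h 3; have h4 := h 4
  have h5 := h 5; have h6 := h 6; have h7 := h 7; have h8 := h 8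
  simp only [Finset.Nat.sum_antidiagonalTuple_three_three, Fin.prod_univ_three, pts,
    Matrix.cons_val] at h0 h1 h2 h3 h4 h5 h6 h7 h8 ⊢
  norm_num at h0 h1 h2 h3 h4 h5 h6 h7 h8
  -- Points 0, 2, 3 lie on `x = 0`, points 1, 4, 5 on `y = 0`, points 6, 7, 8 on `x + y = 5z`.
  obtain ⟨hx021, hx012, hx003⟩ : a ![0, 2, 1] = -6 * a ![0, 3, 0] ∧
      a ![0, 1, 2] = -45 * a ![0, 3, 0] ∧ a ![0, 0, 3] = 50 * a ![0, 3, 0] :=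
    ⟨by linear_combination (-1/54 : ℂ) * h0 + (1/90 : ℂ) * h2 + (1/135 : ℂ) * h3,
      by linear_combination (5/54 : ℂ) * h0 + (-11/90 : ℂ) * h2 + (4/135 : ℂ) * h3,
      by linear_combination (25/27 : ℂ) * h0 + (1/9 : ℂ) * h2 + (-1/27 : ℂ) * h3⟩
  rw [hx003] at h1 h4 h5
  obtain ⟨hy300, hy201, hy102⟩ : a ![3, 0, 0] = -9 * a ![0, 3, 0] ∧
      a ![2, 0, 1] = 54 * a ![0, 3, 0] ∧ a ![1, 0, 2] = -95 * a ![0, 3, 0] :=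
    ⟨by linear_combination (9/14 : ℂ) * h1 + (-1/50 : ℂ) * h4 + (1/350 : ℂ) * h5,
      by linear_combination (-45/14 : ℂ) * h1 + (13/150 : ℂ) * h4 + (-4/525 : ℂ) * h5,
      by linear_combination (25/7 : ℂ) * h1 + (-1/15 : ℂ) * h4 + (1/210 : ℂ) * h5⟩
  rw [hx021, hx012, hx003, hy300, hy201, hy102] at h6 h7 h8
  obtain ⟨h030, h120, h111⟩ : a ![0, 3, 0] = 0 ∧ a ![1, 2, 0] = a ![2, 1, 0] ∧
      a ![1, 1, 1] = -5 * a ![2, 1, 0] :=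
    ⟨by linear_combination (1/900 : ℂ) * h6 + (-1/144 : ℂ) * h7 + (-1/144 : ℂ) * h8,
      by linear_combination (1/90 : ℂ) * h6 + (1/72 : ℂ) * h7 + (-11/72 : ℂ) * h8,
      by linear_combination (13/900 : ℂ) * h6 + (-25/144 : ℂ) * h7 + (35/144 : ℂ) * h8⟩
  rw [hx021, hx012, hx003, hy300, hy201, hy102, h030, h120, h111, triangleCubic]
  simp only [mul_zero, map_zero, map_mul, map_neg, map_ofNat]
  ring

theorem eq_smul_triangleCubic_of_eval_pts {F : MvPolynomial (Fin 3) ℂ} (hF : F.IsHomogeneous 3)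
    (hpts : ∀ i, eval (pts i) F = 0) :
    F = coeff (Finsupp.equivFunOnFinite.symm ![2, 1, 0]) F • triangleCubic := by
  have hsum := hF.eq_sum_antidiagonalTuple
  rw [smul_eq_C_mul]
  conv_lhs => rw [hsum]
  refine sum_eq_C_mul_triangleCubic_of_eval_pts _ fun i => ?_
  have hi := hpts i
  rw [hsum] at hi
  simpa [eval_sum, eval_prod] using hi

theorem homogeneousSubmodule_inf_iInf_ker_aeval_pts :
    homogeneousSubmodule (Fin 3) ℂ 3 ⊓ ⨅ i, LinearMap.ker (aeval (pts i)).toLinearMap =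
      Submodule.span ℂ {triangleCubic} := by
  ext F
  simp only [Submodule.mem_inf, Submodule.mem_iInf, mem_homogeneousSubmodule, LinearMap.mem_ker,
    AlgHom.toLinearMap_apply, Submodule.mem_span_singleton]
  constructor
  · rintro ⟨hF, hpts⟩
    exact ⟨_, (eq_smul_triangleCubic_of_eval_pts hF hpts).symm⟩
  · rintro ⟨c, rfl⟩
    rw [smul_eq_C_mul]
    exact ⟨isHomogeneous_triangleCubic.C_mul c, fun i => by simp [eval_pts_triangleCubic]⟩

theorem stmt3 :
    (∀ F : MvPolynomial (Fin 3) ℂ, F.IsHomogeneous 3 →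
      (∀ i : Fin 9, eval (pts i) F = 0) →
      ∃ c : ℂ, F = c • (X 0 * X 1 * (X 0 + X 1 - 5 * X 2))) ∧
    Module.finrank ℂ
      ↥(homogeneousSubmodule (Fin 3) ℂ 3 ⊓
        ⨅ i : Fin 9, LinearMap.ker (aeval (pts i)).toLinearMap) = 1 := by
  refine ⟨fun F hF hpts => ⟨_, eq_smul_triangleCubic_of_eval_pts hF hpts⟩, ?_⟩
  rw [homogeneousSubmodule_inf_iInf_ker_aeval_pts]
  exact finrank_span_singleton triangleCubic_ne_zero
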